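/- For every n ≥ 2 and m ≥ 2, let k = ⌊min{m/2, log₂ n}⌋. On the n-point uniform metric space there exists a pool R of 2k ≤ m nonempty subsets such that no randomized online algorithm for the metrical service system is c-competitive on R for any c < k/2; i.e., for every probability distribution over deterministic online algorithms and every additive constant a, there is a request sequence ρ over R whose expected online cost exceeds c·z*(ρ) + a. In particular, the randomized competitive ratio for chasing sets from a pool of m subsets of an n-point uniform space is Ω(min{m, log n}). -/

import Mathlib

/-- Movement cost of the state sequence `ss` starting from `s₀`: `Σ_t d(s_{t-1}, s_t)`. -/
def mssPathCost {n : ℕ} (d : Fin n → Fin n → ℝ) : Fin n → List (Fin n) → ℝ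
  | _, [] => 0
  | s₀, s :: ss => d s₀ s + mssPathCost d s ss

/-- `z*(ρ)`: the optimal (offline) cost of serving the request sequence `ρ` (a sequence of
subsets of the point set) from `s₀`; a feasible solution must satisfy `s_t ∈ ρ_t` for all `t`. -/
noncomputable def mssOpt {n : ℕ} (d : Fin n → Fin n → ℝ) (s₀ : Fin n)
    (ρ : List (Finset (Fin n))) : ℝ :=
  sInf {x : ℝ | ∃ ss : List (Fin n),
    List.Forall₂ (fun (s : Fin n) (S : Finset (Fin n)) => s ∈ S) ss ρ ∧
    mssPathCost d s₀ ss = x}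

/-- The sequence of states produced by a deterministic online algorithm `A`
(which sees only the prefix `ρ₁,…,ρ_t` when choosing `s_t`) on the request sequence `ρ`. -/
def mssStates {n : ℕ} (A : List (Finset (Fin n)) → Fin n) (ρ : List (Finset (Fin n))) :
    List (Fin n) :=
  (List.range ρ.length).map fun t => A (ρ.take (t + 1))

/-- A deterministic online algorithm for a metrical service system is valid if it always
serves the last (nonempty) request from within that request. -/
def ValidAlg {n : ℕ} (A : List (Finset (Fin n)) → Fin n) : Prop :=
  ∀ (l : List (Finset (Fin n))) (S : Finset (Fin n)), S.Nonempty → A (l ++ [S]) ∈ S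

/-- The cost incurred by the deterministic online algorithm `A` on `ρ`, starting at `s₀`. -/
def mssAlgCost {n : ℕ} (d : Fin n → Fin n → ℝ) (s₀ : Fin n)
    (A : List (Finset (Fin n)) → Fin n) (ρ : List (Finset (Fin n))) : ℝ :=
  mssPathCost d s₀ (mssStates A ρ)

/-- `A` is `c`-competitive on the request pool `R`: there is an additive constant `a` such
that on every request sequence drawn from `R`, the cost of `A` is at most `c·z*(ρ) + a`. -/
def MssCompetitive {n : ℕ} (d : Fin n → Fin n → ℝ) (s₀ : Fin n) (R : Set (Finset (Fin n)))
    (c : ℝ) (A : List (Finset (Fin n)) → Fin n) : Prop :=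
  ∃ a : ℝ, ∀ ρ : List (Finset (Fin n)), (∀ S ∈ ρ, S ∈ R) →
    mssAlgCost d s₀ A ρ ≤ c * mssOpt d s₀ ρ + a

/-- A randomized online algorithm for a metrical service system: a finitely supported
probability distribution over (valid) deterministic online algorithms. -/
structure MssRandAlg (n : ℕ) where
  k : ℕ
  alg : Fin k → List (Finset (Fin n)) → Fin n
  valid : ∀ i, ValidAlg (alg i)
  p : Fin k → ℝ
  p_nonneg : ∀ i, 0 ≤ p i
  sum_p : ∑ i, p i = 1

/-- Expected cost of a randomized online algorithm on `ρ`, starting at `s₀`. -/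
def mssRandCost {n : ℕ} (d : Fin n → Fin n → ℝ) (s₀ : Fin n) (B : MssRandAlg n)
    (ρ : List (Finset (Fin n))) : ℝ :=
  ∑ i, B.p i * mssAlgCost d s₀ (B.alg i) ρ

/-- A randomized online algorithm `B` is `c`-competitive on the request pool `R`. -/
def MssRandCompetitive {n : ℕ} (d : Fin n → Fin n → ℝ) (s₀ : Fin n)
    (R : Set (Finset (Fin n))) (c : ℝ) (B : MssRandAlg n) : Prop :=
  ∃ a : ℝ, ∀ ρ : List (Finset (Fin n)), (∀ S ∈ ρ, S ∈ R) →
    mssRandCost d s₀ B ρ ≤ c * mssOpt d s₀ ρ + a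

/-- The uniform metric on `n` points: `d(x,y) = 1` for `x ≠ y`, `d(x,x) = 0`. -/
def unifR (n : ℕ) (x y : Fin n) : ℝ := if x = y then 0 else 1

/-- A two-level HST metric with aspect ratio `C > 1`, given by a map `π` assigning to each
point its cluster: `d(x,y) = 1` for distinct points in the same cluster, `d(x,y) = C` for
points in different clusters, and `d(x,x) = 0`. -/
def hst2 (n : ℕ) (π : Fin n → Fin n) (C : ℝ) (x y : Fin n) : ℝ :=
  if x = y then 0 else if π x = π y then 1 else C

/-!
The pool consists of the `2K` sets `{x | bit i of x is b}` with `i < K`, `b : Bool`. In round `t`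
the adversary requests the set with digit `t % K` equal to a fair coin. The two candidates are
disjoint, so every deterministic algorithm moves with probability at least `1/2` in each round;
averaging over the coins (Yao's principle) gives, for every randomized algorithm, a sequence of
length `T` on which it pays at least `T / 2`. Offline, each block of `K` consecutive rounds fixes
the first `K` digits of a single point `x < 2 ^ K ≤ n`, so the optimum moves at most once per block
and pays at most `T / K`.
-/

open Finset

section PathCost

variable {n : ℕ} {d : Fin n → Fin n → ℝ}

lemma mssPathCost_nonneg (hd : ∀ x y, 0 ≤ d x y) :
    ∀ (s : Fin n) (l : List (Fin n)), 0 ≤ mssPathCost d s l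
  | _, [] => le_rfl
  | s, x :: l => add_nonneg (hd s x) (mssPathCost_nonneg hd x l)

lemma mssPathCost_replicate_append {x : Fin n} (hx : d x x = 0) (k : ℕ) (l : List (Fin n)) :
    mssPathCost d x (List.replicate k x ++ l) = mssPathCost d x l := by
  induction k with
  | zero => rfl
  | succ k ih => simp [List.replicate_succ, mssPathCost, hx, ih]

lemma mssPathCost_append_singleton (s : Fin n) (l : List (Fin n)) (x : Fin n) :
    mssPathCost d s (l ++ [x]) = mssPathCost d s l + d (l.getLastD s) x := by
  induction l generalizing s with
  | nil => simp [mssPathCost]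
  | cons y l ih =>
    rw [List.cons_append, mssPathCost, mssPathCost, ih, List.getLastD_cons, add_assoc]

lemma mssOpt_nonneg (hd : ∀ x y, 0 ≤ d x y) (s₀ : Fin n) (ρ : List (Finset (Fin n))) :
    0 ≤ mssOpt d s₀ ρ :=
  Real.sInf_nonneg <| by
    rintro _ ⟨ss, -, rfl⟩
    exact mssPathCost_nonneg hd _ _

lemma mssOpt_le_mssPathCost (hd : ∀ x y, 0 ≤ d x y) (s₀ : Fin n) {ss : List (Fin n)}
    {ρ : List (Finset (Fin n))} (h : List.Forall₂ (fun s S => s ∈ S) ss ρ) :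
    mssOpt d s₀ ρ ≤ mssPathCost d s₀ ss := by
  refine csInf_le ⟨0, ?_⟩ ⟨ss, h, rfl⟩
  rintro _ ⟨l, -, rfl⟩
  exact mssPathCost_nonneg hd _ _

lemma exists_forall₂_flatten_mssPathCost_le (hd1 : ∀ x y, d x y ≤ 1) (hdiag : ∀ x, d x x = 0)
    (blocks : List (List (Finset (Fin n)))) (h : ∀ b ∈ blocks, ∃ x, ∀ S ∈ b, x ∈ S)
    (s : Fin n) :
    ∃ ss, List.Forall₂ (fun s S => s ∈ S) ss blocks.flatten ∧
      mssPathCost d s ss ≤ blocks.length := by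
  induction blocks generalizing s with
  | nil => exact ⟨[], .nil, by simp [mssPathCost]⟩
  | cons b bs ih =>
    have h' : ∀ b ∈ bs, ∃ x, ∀ S ∈ b, x ∈ S := fun b hb => h b (List.mem_cons_of_mem _ hb)
    rcases b with _ | ⟨S, b⟩
    · obtain ⟨ss, hss, hcost⟩ := ih h' s
      exact ⟨ss, by simpa using hss, by simp only [List.length_cons]; push_cast; linarith⟩
    obtain ⟨x, hx⟩ := h _ List.mem_cons_self
    obtain ⟨ss, hss, hcost⟩ := ih h' x
    have hblock : List.Forall₂ (fun s S => s ∈ S) ((S :: b).map fun _ => x) (S :: b) :=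
      List.forall₂_map_left_iff.mpr (List.forall₂_same.mpr hx)
    refine ⟨_, List.rel_append hblock hss, ?_⟩
    have hcost' : mssPathCost d x (List.replicate b.length x ++ ss) = mssPathCost d x ss :=
      mssPathCost_replicate_append (hdiag x) _ _
    simp only [List.map_cons, List.map_const', List.cons_append, mssPathCost, hcost',
      List.length_cons]
    push_cast
    linarith [hd1 s x]

lemma mssOpt_flatten_le_length (hd0 : ∀ x y, 0 ≤ d x y) (hd1 : ∀ x y, d x y ≤ 1)
    (hdiag : ∀ x, d x x = 0) (s₀ : Fin n) (blocks : List (List (Finset (Fin n))))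
    (h : ∀ b ∈ blocks, ∃ x, ∀ S ∈ b, x ∈ S) :
    mssOpt d s₀ blocks.flatten ≤ blocks.length := by
  obtain ⟨ss, hss, hcost⟩ := exists_forall₂_flatten_mssPathCost_le hd1 hdiag blocks h s₀
  exact (mssOpt_le_mssPathCost hd0 s₀ hss).trans hcost

end PathCost

section OnlineCost

variable {n : ℕ} {d : Fin n → Fin n → ℝ}

lemma mssStates_append_singleton (A : List (Finset (Fin n)) → Fin n)
    (ρ : List (Finset (Fin n))) (S : Finset (Fin n)) :
    mssStates A (ρ ++ [S]) = mssStates A ρ ++ [A (ρ ++ [S])] := by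
  simp only [mssStates, List.length_append, List.length_singleton, List.range_succ,
    List.map_append, List.map_singleton]
  congr 1
  · refine List.map_congr_left fun t ht => ?_
    rw [List.take_append_of_le_length (List.mem_range.mp ht)]
  · rw [List.take_of_length_le (by simp)]

lemma mssAlgCost_append_singleton (s₀ : Fin n) (A : List (Finset (Fin n)) → Fin n)
    (ρ : List (Finset (Fin n))) (S : Finset (Fin n)) :
    mssAlgCost d s₀ A (ρ ++ [S]) =
      mssAlgCost d s₀ A ρ + d ((mssStates A ρ).getLastD s₀) (A (ρ ++ [S])) := by
  rw [mssAlgCost, mssStates_append_singleton, mssPathCost_append_singleton, mssAlgCost]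

lemma one_le_add_of_ne (hd0 : ∀ x y, 0 ≤ d x y) (hd1 : ∀ x y, x ≠ y → 1 ≤ d x y)
    (x : Fin n) {y₀ y₁ : Fin n} (hy : y₀ ≠ y₁) : 1 ≤ d x y₀ + d x y₁ := by
  by_cases hx : x = y₀
  · linarith [hd0 x y₀, hd1 x y₁ (hx ▸ hy)]
  · linarith [hd1 x y₀ hx, hd0 x y₁]

/-- Yao's principle, in the easy direction. -/
lemma le_sum_mssRandCost {ι : Type*} [Fintype ι] (s₀ : Fin n) (ρ : ι → List (Finset (Fin n)))
    {M : ℝ} (h : ∀ A, ValidAlg A → M ≤ ∑ v, mssAlgCost d s₀ A (ρ v)) (B : MssRandAlg n) :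
    M ≤ ∑ v, mssRandCost d s₀ B (ρ v) :=
  calc M = ∑ i, B.p i * M := by rw [← Finset.sum_mul, B.sum_p, one_mul]
    _ ≤ ∑ i, B.p i * ∑ v, mssAlgCost d s₀ (B.alg i) (ρ v) :=
      sum_le_sum fun i _ => mul_le_mul_of_nonneg_left (h _ (B.valid i)) (B.p_nonneg i)
    _ = ∑ v, mssRandCost d s₀ B (ρ v) := by
      simp only [mssRandCost, Finset.mul_sum]
      exact Finset.sum_comm

theorem mul_two_pow_le_sum_mssAlgCost (hd0 : ∀ x y, 0 ≤ d x y)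
    (hd1 : ∀ x y, x ≠ y → 1 ≤ d x y) (P : ℕ → Bool → Finset (Fin n))
    (hP : ∀ t b, (P t b).Nonempty) (hPdisj : ∀ t, Disjoint (P t false) (P t true)) (s₀ : Fin n)
    {A : List (Finset (Fin n)) → Fin n} (hA : ValidAlg A) (T : ℕ) :
    T * 2 ^ T ≤ 2 * ∑ v : Fin T → Bool, mssAlgCost d s₀ A (List.ofFn fun t => P t (v t)) := by
  induction T with
  | zero => simp [mssAlgCost, mssStates, mssPathCost]
  | succ T ih =>
    set ρ : (Fin T → Bool) → List (Finset (Fin n)) := fun w => List.ofFn fun t => P t (w t)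
    have hsnoc (w : Fin T → Bool) (b : Bool) :
        (List.ofFn fun t : Fin (T + 1) => P t (Fin.snoc (α := fun _ => Bool) w b t)) =
          ρ w ++ [P T b] := by
      rw [List.ofFn_succ', List.concat_eq_append]
      simp only [Fin.snoc_castSucc, Fin.snoc_last, Fin.val_castSucc, Fin.val_last, ρ]
    -- whatever state the algorithm is in, one of the two possible next requests forces a move
    have hstep (w : Fin T → Bool) :
        2 * mssAlgCost d s₀ A (ρ w) + 1 ≤ ∑ b, mssAlgCost d s₀ A (ρ w ++ [P T b]) := by
      have hne : A (ρ w ++ [P T false]) ≠ A (ρ w ++ [P T true]) := fun h =>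
        disjoint_left.mp (hPdisj T) (hA _ _ (hP T false)) (h ▸ hA _ _ (hP T true))
      simp only [Fintype.sum_bool, mssAlgCost_append_singleton]
      linarith [one_le_add_of_ne hd0 hd1 ((mssStates A (ρ w)).getLastD s₀) hne]
    calc ((T + 1 : ℕ) : ℝ) * 2 ^ (T + 1) = 2 * (T * 2 ^ T) + 2 * 2 ^ T := by push_cast; ring
      _ ≤ 2 * (2 * ∑ w, mssAlgCost d s₀ A (ρ w)) + 2 * 2 ^ T := by gcongr
      _ = 2 * ∑ w, (2 * mssAlgCost d s₀ A (ρ w) + 1) := by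
          rw [sum_add_distrib, ← mul_sum]
          simp only [sum_const, card_univ, Fintype.card_pi, Fintype.card_bool, prod_const,
            Fintype.card_fin, nsmul_eq_mul, Nat.cast_pow, Nat.cast_ofNat, mul_one]
          ring
      _ ≤ 2 * ∑ w, ∑ b, mssAlgCost d s₀ A (ρ w ++ [P T b]) := by
          gcongr with w; exact hstep w
      _ = 2 * ∑ v : Fin (T + 1) → Bool, mssAlgCost d s₀ A (List.ofFn fun t => P t (v t)) := by
          rw [← (Fin.snocEquiv fun _ => Bool).sum_comp, Fintype.sum_prod_type, sum_comm]
          simp only [Fin.snocEquiv_apply, hsnoc]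

end OnlineCost

lemma not_mssRandCompetitive_of_forall_exists {n : ℕ} {d : Fin n → Fin n → ℝ}
    (hd : ∀ x y, 0 ≤ d x y) {s₀ : Fin n} {R : Set (Finset (Fin n))} {B : MssRandAlg n}
    {c r : ℝ} (hr : 0 < r) (hc : c < r)
    (h : ∀ L : ℕ, ∃ ρ : List (Finset (Fin n)), (∀ S ∈ ρ, S ∈ R) ∧
      mssOpt d s₀ ρ ≤ L ∧ r * L ≤ mssRandCost d s₀ B ρ) :
    ¬ MssRandCompetitive d s₀ R c B := by
  rintro ⟨a, ha⟩
  set c' := max c 0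
  have hgap : 0 < r - c' := sub_pos.mpr (max_lt hc hr)
  obtain ⟨L, hL⟩ := exists_nat_gt (a / (r - c'))
  obtain ⟨ρ, hR, hopt, hcost⟩ := h L
  have hcopt : c * mssOpt d s₀ ρ ≤ c' * L :=
    (mul_le_mul_of_nonneg_right (le_max_left c 0) (mssOpt_nonneg hd s₀ ρ)).trans
      (mul_le_mul_of_nonneg_left hopt (le_max_right c 0))
  have := ha ρ hR
  rw [div_lt_iff₀ hgap] at hL
  nlinarith

lemma unifR_nonneg (n : ℕ) (x y : Fin n) : 0 ≤ unifR n x y := by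
  unfold unifR; split_ifs <;> norm_num

lemma unifR_le_one (n : ℕ) (x y : Fin n) : unifR n x y ≤ 1 := by
  unfold unifR; split_ifs <;> norm_num

lemma unifR_self (n : ℕ) (x : Fin n) : unifR n x x = 0 := if_pos rfl

lemma unifR_of_ne {n : ℕ} {x y : Fin n} (h : x ≠ y) : unifR n x y = 1 := if_neg h

def bitFiber (n i : ℕ) (b : Bool) : Finset (Fin n) := {x | x.val.testBit i = b}

def bitPool (n K : ℕ) : Finset (Finset (Fin n)) :=
  univ.image fun p : Fin K × Bool => bitFiber n p.1 p.2

section BitFiber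

variable {n K : ℕ}

@[simp]
lemma mem_bitFiber {i : ℕ} {b : Bool} {x : Fin n} : x ∈ bitFiber n i b ↔ x.val.testBit i = b := by
  simp [bitFiber]

lemma disjoint_bitFiber (i : ℕ) : Disjoint (bitFiber n i false) (bitFiber n i true) := by
  rw [disjoint_left]
  intro x h₀ h₁
  simp_all

lemma exists_forall_mem_bitFiber (h : 2 ^ K ≤ n) (w : Fin K → Bool) :
    ∃ x : Fin n, ∀ i : Fin K, x ∈ bitFiber n i (w i) := by
  let x := BitVec.ofBoolListLE (List.ofFn w)
  refine ⟨⟨x.toNat, (x.isLt.trans_eq (by simp)).trans_le h⟩, fun i => ?_⟩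
  rw [mem_bitFiber, BitVec.testBit_toNat, BitVec.getLsbD_ofBoolListLE]
  simp

lemma bitFiber_nonempty {i : ℕ} (hi : i < K) (h : 2 ^ K ≤ n) (b : Bool) :
    (bitFiber n i b).Nonempty := by
  obtain ⟨x, hx⟩ := exists_forall_mem_bitFiber h fun _ => b
  exact ⟨x, hx ⟨i, hi⟩⟩

lemma bitFiber_mem_bitPool {i : ℕ} (hi : i < K) (b : Bool) : bitFiber n i b ∈ bitPool n K :=
  mem_image.mpr ⟨(⟨i, hi⟩, b), mem_univ _, rfl⟩

lemma nonempty_of_mem_bitPool (h : 2 ^ K ≤ n) {S : Finset (Fin n)} (hS : S ∈ bitPool n K) :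
    S.Nonempty := by
  obtain ⟨⟨i, b⟩, -, rfl⟩ := mem_image.mp hS
  exact bitFiber_nonempty i.2 h b

lemma card_bitPool (h : 2 ^ K ≤ n) : #(bitPool n K) = 2 * K := by
  rw [bitPool, card_image_of_injective _ ?_, card_univ, Fintype.card_prod, Fintype.card_fin,
    Fintype.card_bool, mul_comm]
  rintro ⟨i, b⟩ ⟨j, b'⟩ hij
  have hmem (x : ℕ) (hx : x < n) : x.testBit i = b ↔ x.testBit j = b' := by
    simpa using congrArg (⟨x, hx⟩ ∈ ·) hij
  have hpow : 2 ^ (i : ℕ) < n := (Nat.pow_lt_pow_right one_lt_two i.2).trans_le h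
  -- the point `0` separates the digit values, the point `2 ^ i` separates the positions
  have hb : b = b' := by simpa using hmem 0 ((Nat.two_pow_pos i).trans hpow)
  subst hb
  have hi := hmem _ hpow
  simp only [Nat.testBit_two_pow, decide_true] at hi
  cases b <;> simp_all [Fin.val_inj]

lemma mssOpt_ofFn_bitFiber_le (h : 2 ^ K ≤ n) (s₀ : Fin n) {L : ℕ} (v : Fin (L * K) → Bool) :
    mssOpt (unifR n) s₀ (List.ofFn fun t => bitFiber n (t % K) (v t)) ≤ L := by
  rw [List.ofFn_mul]
  refine (mssOpt_flatten_le_length (unifR_nonneg n) (unifR_le_one n) (unifR_self n) _ _ ?_).trans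
    (by simp)
  simp only [List.mem_ofFn, forall_exists_index]
  rintro _ j rfl
  -- the `j`-th block of `K` requests prescribes the first `K` digits
  obtain ⟨x, hx⟩ := exists_forall_mem_bitFiber h fun i => v ⟨j * K + i, by nlinarith [j.2, i.2]⟩
  refine ⟨x, ?_⟩
  simp only [List.mem_ofFn, forall_exists_index]
  rintro _ i rfl
  simpa [Nat.mul_add_mod, Nat.mod_eq_of_lt i.2] using hx i

end BitFiber

theorem not_mssRandCompetitive_bitPool {n K : ℕ} (hK : 0 < K) (h : 2 ^ K ≤ n) {c : ℝ}
    (hc : c < K / 2) (s₀ : Fin n) (B : MssRandAlg n) :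
    ¬ MssRandCompetitive (unifR n) s₀ (bitPool n K) c B := by
  refine not_mssRandCompetitive_of_forall_exists (unifR_nonneg n) (by positivity) hc fun L => ?_
  let ρ (v : Fin (L * K) → Bool) : List (Finset (Fin n)) :=
    List.ofFn fun t => bitFiber n (t % K) (v t)
  have hsum : ∑ _v : Fin (L * K) → Bool, ((L * K : ℕ) / 2 : ℝ) ≤
      ∑ v, mssRandCost (unifR n) s₀ B (ρ v) := by
    refine le_sum_mssRandCost s₀ ρ (fun A hA => ?_) B
    have := mul_two_pow_le_sum_mssAlgCost (unifR_nonneg n) (fun _ _ => (unifR_of_ne · |>.ge))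
      (fun t => bitFiber n (t % K)) (fun t => bitFiber_nonempty (Nat.mod_lt t hK) h)
      (fun t => disjoint_bitFiber _) s₀ hA (L * K)
    simp only [sum_const, card_univ, Fintype.card_fun, Fintype.card_bool, Fintype.card_fin,
      nsmul_eq_mul, Nat.cast_pow, Nat.cast_ofNat]
    linarith
  obtain ⟨v, -, hv⟩ := exists_le_of_sum_le univ_nonempty hsum
  refine ⟨ρ v, fun S hS => ?_, mssOpt_ofFn_bitFiber_le h s₀ v, by push_cast at hv ⊢; linarith⟩
  obtain ⟨t, rfl⟩ := List.mem_ofFn.mp hS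
  exact bitFiber_mem_bitPool (Nat.mod_lt t hK) _

/-- For every `n ≥ 2` and `m ≥ 2`, let `k = ⌊min{m/2, log₂ n}⌋`. On the
`n`-point uniform metric space there exists a pool `R` of `2k ≤ m` nonempty subsets such
that no randomized online algorithm for the metrical service system is `c`-competitive on
`R` for any `c < k/2`. -/
theorem stmt8 (n m : ℕ) (hn : 2 ≤ n) (hm : 2 ≤ m) :
    ∃ R : Finset (Finset (Fin n)),
      R.card = 2 * ⌊min ((m : ℝ) / 2) (Real.logb 2 (n : ℝ))⌋₊ ∧
      2 * ⌊min ((m : ℝ) / 2) (Real.logb 2 (n : ℝ))⌋₊ ≤ m ∧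
      (∀ S ∈ R, S.Nonempty) ∧
      ∀ (s₀ : Fin n) (c : ℝ),
        c < (⌊min ((m : ℝ) / 2) (Real.logb 2 (n : ℝ))⌋₊ : ℝ) / 2 →
          ∀ B : MssRandAlg n, ¬ MssRandCompetitive (unifR n) s₀ ↑R c B := by
  set K := ⌊min ((m : ℝ) / 2) (Real.logb 2 (n : ℝ))⌋₊
  have hn' : (2 : ℝ) ≤ n := by exact_mod_cast hn
  have hlog : 1 ≤ Real.logb 2 n :=
    (Real.le_logb_iff_rpow_le one_lt_two (by positivity)).mpr (by simpa using hn')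
  have hmin : 1 ≤ min ((m : ℝ) / 2) (Real.logb 2 n) :=
    le_min (by rw [le_div_iff₀ two_pos]; exact_mod_cast hm) hlog
  have hK : (K : ℝ) ≤ min ((m : ℝ) / 2) (Real.logb 2 n) := Nat.floor_le (by linarith)
  have hKm : 2 * K ≤ m := by
    have := hK.trans (min_le_left _ _)
    exact_mod_cast (by push_cast; linarith : ((2 * K : ℕ) : ℝ) ≤ m)
  have hKn : 2 ^ K ≤ n := by
    have := (Real.le_logb_iff_rpow_le one_lt_two (by positivity)).mp (hK.trans (min_le_right _ _))
    exact_mod_cast (by simpa using this : ((2 ^ K : ℕ) : ℝ) ≤ n)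
  exact ⟨bitPool n K, card_bitPool hKn, hKm, fun S => nonempty_of_mem_bitPool hKn,
    fun s₀ c hc => not_mssRandCompetitive_bitPool (Nat.floor_pos.mpr hmin) hKn hc s₀⟩
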